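/- The number of semistandard C2-tableaux of shape (a,b) — semistandard tableaux with entries in {1,2,3,4}, first row of length a+b, second row of length b, such that no column equals [1;4] and the column [2;3] appears at most once — equals (a+1)(b+1)(a+b+2)(a+2b+3)/6, the Weyl dimension of the irreducible sp(4)-module of highest weight aω₁+bω₂. -/

import Mathlib

namespace Stmt9

/-- A two-row semistandard Young tableau with entries in `Fin n` (value `v`
stands for the entry `v + 1`) and shape `(a,b)`: first row of length `a + b`,
second row of length `b`; rows weakly increase, columns strictly increase. -/
def SSYT (n a b : ℕ) (r1 : Fin (a + b) → Fin n) (r2 : Fin b → Fin n) : Prop :=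
  Monotone r1 ∧ Monotone r2 ∧
    ∀ i : Fin b, r1 ⟨i.1, lt_of_lt_of_le i.2 (Nat.le_add_left b a)⟩ < r2 i

/-- The `C₂` condition: no column equals `[1;4]` (0-indexed `(0,3)`) and the
column `[2;3]` (0-indexed `(1,2)`) appears at most once. -/
def CondC2 (a b : ℕ) (r1 : Fin (a + b) → Fin 4) (r2 : Fin b → Fin 4) : Prop :=
  (∀ i : Fin b,
    ¬(r1 ⟨i.1, lt_of_lt_of_le i.2 (Nat.le_add_left b a)⟩ = 0 ∧ r2 i = 3)) ∧
  ∀ i j : Fin b,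
    (r1 ⟨i.1, lt_of_lt_of_le i.2 (Nat.le_add_left b a)⟩ = 1 ∧ r2 i = 2) →
    (r1 ⟨j.1, lt_of_lt_of_le j.2 (Nat.le_add_left b a)⟩ = 1 ∧ r2 j = 2) →
    i = j

/-! A weakly increasing row with entries in `{1,2,3,4}` is determined by the numbers
`x₁ ≤ x₂ ≤ x₃` of its entries `≤ 1`, `≤ 2`, `≤ 3`. In a `C₂`-tableau the second row has no `1`,
and every column condition becomes a linear inequality between `x₁ x₂ x₃` and the counts `y₂ y₃`
of the second row, so the tableaux are the lattice points of a polytope. For fixed `x₂` and `x₃`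
there are `(min x₂ b + 1) * (x₂ + 1)` choices of `x₁ y₂ y₃`, and summing this over
`x₂ ≤ x₃` and `b ≤ x₃ ≤ a + b` gives the Weyl dimension. -/

open Finset

lemma card_filter_product {α β : Type*} (s : Finset α) (t : Finset β) (P : α × β → Prop)
    [DecidablePred P] : #{p ∈ s ×ˢ t | P p} = ∑ x ∈ s, #{y ∈ t | P (x, y)} := by
  simp only [card_filter, sum_product]

lemma sum_range_ite_le {M : Type*} [AddCommMonoid M] {m N : ℕ} (hm : m < N) (f : ℕ → M) :
    ∑ i ∈ range N, (if i ≤ m then f i else 0) = ∑ i ∈ range (m + 1), f i := by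
  rw [← sum_filter]
  congr 1
  ext i
  simp only [mem_filter, mem_range]
  omega

section LevelCount

variable {α : Type*} [Preorder α] [DecidableLT α] {n : ℕ}

def countLT (f : Fin n → α) (c : α) : ℕ := #{i | f i < c}

lemma countLT_le (f : Fin n → α) (c : α) : countLT f c ≤ n :=
  (card_filter_le _ _).trans_eq (card_fin n)

lemma countLT_mono (f : Fin n → α) {c d : α} (hcd : c ≤ d) : countLT f c ≤ countLT f d :=
  card_le_card fun _ hi => by simp only [mem_filter] at hi ⊢; exact ⟨hi.1, hi.2.trans_le hcd⟩

lemma lt_countLT_iff {f : Fin n → α} (hf : Monotone f) (c : α) (i : Fin n) :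
    i.val < countLT f c ↔ f i < c := by
  constructor
  · intro hi
    by_contra hfi
    have hsub : ({j | f j < c} : Finset (Fin n)) ⊆ Iio i := fun j hj => by
      simp only [mem_filter, mem_univ, true_and] at hj
      exact mem_Iio.2 (lt_of_not_ge fun hij => hfi ((hf hij).trans_lt hj))
    exact hi.not_ge ((card_le_card hsub).trans_eq (Fin.card_Iio i))
  · intro hfi
    have hsub : Iic i ⊆ ({j | f j < c} : Finset (Fin n)) := fun j hj => by
      simp only [mem_filter, mem_univ, true_and]
      exact (hf (mem_Iic.1 hj)).trans_lt hfi
    exact (Fin.card_Iic i).symm.trans_le (card_le_card hsub)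

lemma countLT_eq_of_forall_lt_iff {f : Fin n → α} (hf : Monotone f) {c : α} {m : ℕ}
    (hm : m ≤ n) (h : ∀ i : Fin n, i.val < m ↔ f i < c) : countLT f c = m := by
  have hle := countLT_le f c
  by_contra hne
  rcases Nat.lt_or_gt_of_ne hne with hlt | hlt
  · exact ((lt_countLT_iff hf c ⟨_, hlt.trans_le hm⟩).2 ((h _).1 hlt)).false
  · exact ((h ⟨m, hlt.trans_le hle⟩).2 ((lt_countLT_iff hf c _).1 hlt)).false

end LevelCount

section StepRow

variable {n : ℕ}

def stepRow (x₁ x₂ x₃ : ℕ) (i : Fin n) : Fin 4 :=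
  if i.val < x₁ then 0 else if i.val < x₂ then 1 else if i.val < x₃ then 2 else 3

lemma monotone_stepRow (x₁ x₂ x₃ : ℕ) : Monotone (stepRow (n := n) x₁ x₂ x₃) := by
  intro i j hij
  simp only [stepRow]
  split_ifs <;> omega

lemma eq_stepRow_countLT {f : Fin n → Fin 4} (hf : Monotone f) :
    f = stepRow (countLT f 1) (countLT f 2) (countLT f 3) := by
  funext i
  have h₁ := lt_countLT_iff hf 1 i
  have h₂ := lt_countLT_iff hf 2 i
  have h₃ := lt_countLT_iff hf 3 i
  simp only [stepRow]
  split_ifs <;> omega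

lemma countLT_stepRow {x₁ x₂ x₃ : ℕ} (h₁₂ : x₁ ≤ x₂) (h₂₃ : x₂ ≤ x₃) (h₃ : x₃ ≤ n) :
    countLT (stepRow (n := n) x₁ x₂ x₃) 1 = x₁ ∧ countLT (stepRow (n := n) x₁ x₂ x₃) 2 = x₂ ∧
      countLT (stepRow (n := n) x₁ x₂ x₃) 3 = x₃ := by
  refine ⟨?_, ?_, ?_⟩ <;>
    refine countLT_eq_of_forall_lt_iff (monotone_stepRow _ _ _) (by omega) fun i => ?_ <;>
    simp only [stepRow] <;> split_ifs <;> omega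

end StepRow

/-- `x₁ x₂ x₃` and `y₂ y₃` count the entries `≤ 1, ≤ 2, ≤ 3` of the first and second row.
Columns are strict iff `b ≤ x₃`, `y₂ ≤ x₁` and `y₃ ≤ x₂`; there is no column `[1;4]` iff
`min x₁ b ≤ y₃`; the columns `[2;3]` are those at positions in `[x₁, y₃)`, hence `y₃ ≤ x₁ + 1`. -/
def IsC2Param (a b x₁ x₂ x₃ y₂ y₃ : ℕ) : Prop :=
  (x₁ ≤ x₂ ∧ x₂ ≤ x₃ ∧ b ≤ x₃ ∧ x₃ ≤ a + b) ∧
    (y₂ ≤ y₃ ∧ y₃ ≤ b ∧ y₂ ≤ x₁ ∧ min x₁ b ≤ y₃ ∧ y₃ ≤ x₂ ∧ y₃ ≤ x₁ + 1)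

instance (a b x₁ x₂ x₃ y₂ y₃ : ℕ) : Decidable (IsC2Param a b x₁ x₂ x₃ y₂ y₃) := by
  unfold IsC2Param; infer_instance

theorem isC2Tableau_stepRow_iff {a b x₁ x₂ x₃ y₂ y₃ : ℕ} (h₁₂ : x₁ ≤ x₂) (h₂₃ : x₂ ≤ x₃)
    (h₃ : x₃ ≤ a + b) (hy : y₂ ≤ y₃) (hy₃ : y₃ ≤ b) :
    SSYT 4 a b (stepRow x₁ x₂ x₃) (stepRow 0 y₂ y₃) ∧
        CondC2 a b (stepRow x₁ x₂ x₃) (stepRow 0 y₂ y₃) ↔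
      IsC2Param a b x₁ x₂ x₃ y₂ y₃ := by
  simp only [SSYT, CondC2, IsC2Param, stepRow, Fin.forall_iff, Fin.mk.injEq]
  constructor
  · rintro ⟨⟨-, -, hcol⟩, hno14, huniq23⟩
    have hx₃ : b ≤ x₃ := by
      by_contra! h
      have := hcol x₃ h
      split_ifs at this <;> omega
    have hy₂ : y₂ ≤ x₁ := by
      by_contra! h
      have := hcol x₁ (by omega)
      split_ifs at this <;> omega
    have hy₃x₂ : y₃ ≤ x₂ := by
      by_contra! h
      have := hcol x₂ (by omega)
      split_ifs at this <;> omega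
    refine ⟨⟨h₁₂, h₂₃, hx₃, h₃⟩, hy, hy₃, hy₂, ?_, hy₃x₂, ?_⟩
    · by_contra! h
      have := hno14 y₃ (by omega)
      split_ifs at this <;> omega
    · by_contra! h
      have := huniq23 x₁ (by omega) (x₁ + 1) (by omega)
      split_ifs at this <;> omega
  · rintro ⟨⟨-, -, hx₃, -⟩, -, -, hy₂, hy₃, hy₃x₂, hy₃x₁⟩
    refine ⟨⟨monotone_stepRow _ _ _, monotone_stepRow _ _ _, fun i hi => ?_⟩,
      fun i hi => ?_, fun i hi j hj => ?_⟩
    · split_ifs <;> omega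
    · split_ifs <;> omega
    · rintro ⟨hi₁, hi₂⟩ ⟨hj₁, hj₂⟩
      split_ifs at hi₁ <;> split_ifs at hj₁ <;> split_ifs at hi₂ <;> split_ifs at hj₂ <;> omega

def C2Params (a b : ℕ) : Finset (ℕ × ℕ × ℕ × ℕ × ℕ) :=
  {p ∈ range (a + b + 1) ×ˢ range (a + b + 1) ×ˢ range (a + b + 1) ×ˢ range (b + 1) ×ˢ
      range (b + 1) | IsC2Param a b p.1 p.2.1 p.2.2.1 p.2.2.2.1 p.2.2.2.2}

lemma mem_C2Params {a b x₁ x₂ x₃ y₂ y₃ : ℕ} :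
    (x₁, x₂, x₃, y₂, y₃) ∈ C2Params a b ↔ IsC2Param a b x₁ x₂ x₃ y₂ y₃ := by
  simp only [C2Params, mem_filter, mem_product, mem_range, and_iff_right_iff_imp]
  intro h
  unfold IsC2Param at h
  omega

lemma eq_stepRow_of_SSYT {a b : ℕ} {r₁ : Fin (a + b) → Fin 4} {r₂ : Fin b → Fin 4}
    (h : SSYT 4 a b r₁ r₂) : r₂ = stepRow 0 (countLT r₂ 2) (countLT r₂ 3) := by
  have hzero : countLT r₂ 1 = 0 :=
    countLT_eq_of_forall_lt_iff h.2.1 (Nat.zero_le _) fun i => by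
      have := h.2.2 i
      omega
  conv_lhs => rw [eq_stepRow_countLT h.2.1, hzero]

lemma isC2Param_countLT {a b : ℕ} {r₁ : Fin (a + b) → Fin 4} {r₂ : Fin b → Fin 4}
    (h : SSYT 4 a b r₁ r₂ ∧ CondC2 a b r₁ r₂) :
    IsC2Param a b (countLT r₁ 1) (countLT r₁ 2) (countLT r₁ 3) (countLT r₂ 2) (countLT r₂ 3) := by
  rw [eq_stepRow_countLT h.1.1, eq_stepRow_of_SSYT h.1] at h
  refine (isC2Tableau_stepRow_iff ?_ ?_ (countLT_le _ _) ?_ (countLT_le _ _)).1 h <;>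
    exact countLT_mono _ (by decide)

theorem card_C2Tableaux (a b : ℕ) :
    Nat.card {T : (Fin (a + b) → Fin 4) × (Fin b → Fin 4) //
        SSYT 4 a b T.1 T.2 ∧ CondC2 a b T.1 T.2} = #(C2Params a b) := by
  classical
  rw [Nat.card_eq_fintype_card, Fintype.card_subtype]
  refine card_nbij'
    (fun T => (countLT T.1 1, countLT T.1 2, countLT T.1 3, countLT T.2 2, countLT T.2 3))
    (fun p => (stepRow p.1 p.2.1 p.2.2.1, stepRow 0 p.2.2.2.1 p.2.2.2.2)) ?_ ?_ ?_ ?_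
  · rintro ⟨r₁, r₂⟩ hT
    exact mem_C2Params.2 (isC2Param_countLT (by simpa using hT))
  · rintro ⟨x₁, x₂, x₃, y₂, y₃⟩ hp
    obtain ⟨⟨h₁₂, h₂₃, -, h₃⟩, hy, hy₃, -⟩ := mem_C2Params.1 hp
    simpa using (isC2Tableau_stepRow_iff h₁₂ h₂₃ h₃ hy hy₃).2 (mem_C2Params.1 hp)
  · rintro ⟨r₁, r₂⟩ hT
    replace hT : SSYT 4 a b r₁ r₂ ∧ CondC2 a b r₁ r₂ := by simpa using hT
    exact Prod.ext (eq_stepRow_countLT hT.1.1).symm (eq_stepRow_of_SSYT hT.1).symm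
  · rintro ⟨x₁, x₂, x₃, y₂, y₃⟩ hp
    obtain ⟨⟨h₁₂, h₂₃, -, h₃⟩, hy, hy₃, -⟩ := mem_C2Params.1 hp
    obtain ⟨e₁, e₂, e₃⟩ := countLT_stepRow (n := a + b) h₁₂ h₂₃ h₃
    obtain ⟨-, f₂, f₃⟩ := countLT_stepRow (n := b) (Nat.zero_le y₂) hy hy₃
    simp only [e₁, e₂, e₃, f₂, f₃]

def rowTwoCount (b x₁ x₂ : ℕ) : ℕ := (min x₁ b + 1) * if x₁ < min x₂ b then 2 else 1

lemma sum_rowTwoCount_succ (b n : ℕ) :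
    ∑ x ∈ range n, rowTwoCount b x (x + 1) = (min n b + 1) * n := by
  induction n with
  | zero => simp
  | succ n ih =>
    rw [sum_range_succ, ih, rowTwoCount]
    by_cases hn : n < b
    · rw [if_pos (by omega), min_eq_left hn.le, min_eq_left hn]
      ring
    · rw [if_neg (by omega), min_eq_right (not_lt.1 hn), min_eq_right (by omega)]
      ring

lemma sum_rowTwoCount (b x₂ : ℕ) :
    ∑ x₁ ∈ range (x₂ + 1), rowTwoCount b x₁ x₂ = (min x₂ b + 1) * (x₂ + 1) := by
  have hlt : ∀ x₁ ∈ range x₂, rowTwoCount b x₁ x₂ = rowTwoCount b x₁ (x₁ + 1) := by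
    intro x₁ hx₁
    rw [mem_range] at hx₁
    simp only [rowTwoCount]
    congr 2
    exact propext (by omega)
  rw [sum_range_succ, sum_congr rfl hlt, sum_rowTwoCount_succ, rowTwoCount,
    if_neg (not_lt.2 (min_le_left x₂ b))]
  ring

lemma card_C2Params_fiber {a b x₁ x₂ x₃ : ℕ} (hx₃ : x₃ < a + b + 1) :
    #{y ∈ range (b + 1) ×ˢ range (b + 1) | IsC2Param a b x₁ x₂ x₃ y.1 y.2} =
      if b ≤ x₃ then if x₂ ≤ x₃ then if x₁ ≤ x₂ then rowTwoCount b x₁ x₂ else 0 else 0 else 0 := by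
  split_ifs with hb h₂₃ h₁₂
  · have hfilter : {y ∈ range (b + 1) ×ˢ range (b + 1) | IsC2Param a b x₁ x₂ x₃ y.1 y.2} =
        range (min x₁ b + 1) ×ˢ Icc (min x₁ b) (min (min x₂ b) (x₁ + 1)) := by
      ext ⟨y₂, y₃⟩
      rw [mem_filter]
      simp only [IsC2Param, mem_product, mem_range, mem_Icc]
      omega
    rw [hfilter, card_product, card_range, Nat.card_Icc, rowTwoCount]
    congr 1
    split_ifs <;> omega
  all_goals
    refine card_eq_zero.2 (filter_eq_empty_iff.2 fun y _ h => ?_)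
    simp only [IsC2Param] at h
    omega

lemma card_C2Params (a b : ℕ) :
    #(C2Params a b) =
      ∑ k ∈ range (a + 1), ∑ x₂ ∈ range (b + k + 1), (min x₂ b + 1) * (x₂ + 1) := by
  set R := range (a + b + 1)
  calc #(C2Params a b)
      = ∑ x₁ ∈ R, ∑ x₂ ∈ R, ∑ x₃ ∈ R, if b ≤ x₃ then if x₂ ≤ x₃ then if x₁ ≤ x₂ then
          rowTwoCount b x₁ x₂ else 0 else 0 else 0 := by
        rw [C2Params, card_filter_product]
        refine sum_congr rfl fun x₁ _ => ?_
        rw [card_filter_product]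
        refine sum_congr rfl fun x₂ _ => ?_
        rw [card_filter_product]
        exact sum_congr rfl fun x₃ hx₃ => card_C2Params_fiber (mem_range.1 hx₃)
    _ = ∑ x₃ ∈ R, ∑ x₂ ∈ R, ∑ x₁ ∈ R, if b ≤ x₃ then if x₂ ≤ x₃ then if x₁ ≤ x₂ then
          rowTwoCount b x₁ x₂ else 0 else 0 else 0 :=
        sum_comm.trans ((sum_congr rfl fun _ _ => sum_comm).trans sum_comm)
    _ = ∑ x₃ ∈ R, if b ≤ x₃ then ∑ x₂ ∈ range (x₃ + 1), (min x₂ b + 1) * (x₂ + 1) else 0 := by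
        simp only [sum_ite_irrel, sum_const_zero]
        refine sum_congr rfl fun x₃ hx₃ => ?_
        split_ifs
        · rw [sum_range_ite_le (mem_range.1 hx₃)]
          refine sum_congr rfl fun x₂ hx₂ => ?_
          rw [sum_range_ite_le (by simp only [mem_range, R] at hx₂ hx₃; omega), sum_rowTwoCount]
        · rfl
    _ = _ := by
        rw [← sum_filter, show R.filter (b ≤ ·) = Ico b (a + b + 1) by
            ext; simp only [mem_filter, mem_range, mem_Ico, R]; omega,
          sum_Ico_eq_sum_range, show a + b + 1 - b = a + 1 by omega]

lemma six_mul_sum_range_succ_mul_succ (n : ℕ) :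
    6 * ∑ i ∈ range n, (i + 1) * (i + 1) = n * (n + 1) * (2 * n + 1) := by
  induction n with
  | zero => simp
  | succ n ih =>
    rw [sum_range_succ, mul_add, ih]
    ring

lemma six_mul_sum_min_succ_mul_succ (b k : ℕ) :
    6 * ∑ x₂ ∈ range (b + k + 1), (min x₂ b + 1) * (x₂ + 1) =
      (b + 1) * (b + 2) * (2 * b + 3) + 3 * (b + 1) * k * (2 * b + k + 3) := by
  induction k with
  | zero =>
    rw [sum_congr rfl fun x₂ hx₂ => by rw [min_eq_left (by rw [mem_range] at hx₂; omega)],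
      six_mul_sum_range_succ_mul_succ]
    ring
  | succ k ih =>
    rw [← add_assoc, sum_range_succ, mul_add, ih, min_eq_right (by omega)]
    ring

lemma six_mul_sum_sum_min_succ_mul_succ (a b : ℕ) :
    6 * ∑ k ∈ range (a + 1), ∑ x₂ ∈ range (b + k + 1), (min x₂ b + 1) * (x₂ + 1) =
      (a + 1) * (b + 1) * (a + b + 2) * (a + 2 * b + 3) := by
  induction a with
  | zero =>
    rw [sum_range_one, six_mul_sum_min_succ_mul_succ b 0]
    ring
  | succ a ih =>
    rw [sum_range_succ, mul_add, ih, six_mul_sum_min_succ_mul_succ]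
    ring

theorem card_ssyt_C2 (a b : ℕ) :
    Nat.card {T : (Fin (a + b) → Fin 4) × (Fin b → Fin 4) //
        SSYT 4 a b T.1 T.2 ∧ CondC2 a b T.1 T.2} * 6 =
      (a + 1) * (b + 1) * (a + b + 2) * (a + 2 * b + 3) := by
  rw [card_C2Tableaux, card_C2Params, mul_comm]
  exact six_mul_sum_sum_min_succ_mul_succ a b

end Stmt9
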